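/- arXiv:2512.06160 — 2 statements merged into one kernel-verified Lean document; each statement's English description precedes it below -/
import Mathlib

section
/- Let G be a group and let A be a ring graded by G, with homogeneous components (A_g)_{g∈G} (so A is the internal direct sum of the additive subgroups A_g and A_g·A_h ⊆ A_{gh} for all g, h ∈ G). Suppose A carries a graded involution: an additive map * : A → A with (ab)* = b*a* and (a*)* = a for all a, b ∈ A, such that (A_g)* ⊆ A_g for every g ∈ G. If a ∈ A_g and b ∈ A_h are homogeneous elements with ab ≠ 0, then gh = hg. (This is the precise content of the claim that the support of a G-graded algebra admitting a graded involution is central/commutative.) -/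
/-! Since `*` preserves degrees, `(ab)*` lies in degree `gh`; since it reverses products,
`(ab)* = b* a*` lies in degree `hg`. It is nonzero because `*` is injective, and a nonzero
element of an internal direct sum has only one degree. -/

theorem DirectSum.IsInternal.eq_of_mem_of_mem {ι M : Type*} [DecidableEq ι] [AddCommGroup M]
    {𝒜 : ι → AddSubgroup M} (h𝒜 : DirectSum.IsInternal 𝒜) {i j : ι} {x : M} (hx : x ≠ 0)
    (hi : x ∈ 𝒜 i) (hj : x ∈ 𝒜 j) : i = j := by
  by_contra hij
  exact hx (AddSubgroup.disjoint_def.mp (h𝒜.addSubgroup_iSupIndep.pairwiseDisjoint hij) hi hj)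

/-- Let `A` be a ring graded by a group `G` (internal direct sum of additive
subgroups `𝒜 g` with `𝒜 g * 𝒜 h ⊆ 𝒜 (g*h)`) admitting a graded involution,
i.e. an additive map `star` with `star (a*b) = star b * star a`,
`star (star a) = a` and `star (𝒜 g) ⊆ 𝒜 g` for all `g`.  If `a ∈ 𝒜 g` and
`b ∈ 𝒜 h` are homogeneous elements with `a * b ≠ 0`, then `g * h = h * g`. -/
theorem stmt5 {G : Type*} [Group G] [DecidableEq G] {A : Type*} [Ring A]
    (𝒜 : G → AddSubgroup A)
    (hinternal : DirectSum.IsInternal 𝒜)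
    (hmul : ∀ g h : G, ∀ a ∈ 𝒜 g, ∀ b ∈ 𝒜 h, a * b ∈ 𝒜 (g * h))
    (star : A →+ A)
    (hstar_mul : ∀ a b : A, star (a * b) = star b * star a)
    (hstar_invol : ∀ a : A, star (star a) = a)
    (hstar_graded : ∀ g : G, ∀ a ∈ 𝒜 g, star a ∈ 𝒜 g)
    {g h : G} {a b : A} (ha : a ∈ 𝒜 g) (hb : b ∈ 𝒜 h) (hab : a * b ≠ 0) :
    g * h = h * g := by
  have hstar_ne : star (a * b) ≠ 0 :=
    (map_ne_zero_iff star (Function.LeftInverse.injective hstar_invol)).mpr hab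
  have hdeg_gh : star (a * b) ∈ 𝒜 (g * h) := hstar_graded _ _ (hmul g h a ha b hb)
  have hdeg_hg : star (a * b) ∈ 𝒜 (h * g) := by
    rw [hstar_mul]
    exact hmul h g _ (hstar_graded h b hb) _ (hstar_graded g a ha)
  exact hinternal.eq_of_mem_of_mem hstar_ne hdeg_gh hdeg_hg
end

section
/- Let F be a field and let A be an associative F-algebra equipped with an F-linear involution * (so (xy)* = y*x* and (x*)* = x). Suppose u, a ∈ A satisfy: u² = u, u* = u, u·a = a, a·u = 0, a*·a = 0, and a·a* ≠ 0. Then the four elements u, a, a*, a·a* are linearly independent, their F-span S is closed under multiplication and under *, and the linear map φ : S → M₃(F) determined by φ(u) = e₁₁ + e₃₃, φ(a) = e₁₂, φ(a*) = e₂₃, φ(a·a*) = e₁₃ is an injective (non-unital) F-algebra homomorphism onto the subalgebra M₄ = F(e₁₁+e₃₃) + Fe₁₂ + Fe₂₃ + Fe₁₃ of 3×3 upper triangular matrices which intertwines * with the reflection involution ρ, i.e., φ(x*) = ρ(φ(x)) for all x ∈ S. -/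
/-!
Put `b = a*`. Applying `*` to `u a = a` and `a u = 0` gives `b u = b` and `u b = 0`, and
`a² = (u a) a = u (a u) a = 0`, `b² = (a²)* = 0`; with `b a = 0` these are exactly the products
of `e₁₁ + e₃₃, e₁₂, e₂₃` in `M₃(F)`. Hence `u, a, b, a b` multiply by the structure constants of
the basis `e₁₁ + e₃₃, e₁₂, e₂₃, e₁₃` of `M₄`, and `*` swaps the coefficients of `a` and `b`, just
as `ρ` swaps those of `e₁₂` and `e₂₃`. Multiplying a vanishing linear combination by `a` on the
right, by `b` on the right and by `a` on the left isolates its coefficients, using only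
`a b ≠ 0`. Since `e₁₁ + e₃₃` and `e₁₂` satisfy the same hypotheses in `(M₃(F), ρ)`, `φ` is the
linear isomorphism matching coefficients of the two bases.
-/

/-- The reflection involution on `3 × 3` matrices, reflecting a matrix along
its secondary diagonal: `ρ(M)_{ij} = M_{(4-j)(4-i)}` in 1-based indexing. -/
def reflectionInvolution {F : Type*} (M : Matrix (Fin 3) (Fin 3) F) :
    Matrix (Fin 3) (Fin 3) F :=
  fun i j => M (2 - j) (2 - i)

namespace LinearMap

variable {R M N P : Type*} [Semiring R] [AddCommMonoid M] [AddCommMonoid N] [AddCommMonoid P]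
  [Module R M] [Module R N] [Module R P]

noncomputable def compInvOfRangeEq (g : M →ₗ[R] P) (f : M →ₗ[R] N) (hf : Function.Injective f)
    {S : Submodule R N} (hS : range f = S) : S →ₗ[R] P :=
  g ∘ₗ ((LinearEquiv.ofEq _ _ hS.symm).trans (LinearEquiv.ofInjective f hf).symm).toLinearMap

variable {g : M →ₗ[R] P} {f : M →ₗ[R] N} {hf : Function.Injective f} {S : Submodule R N}
  {hS : range f = S}

theorem compInvOfRangeEq_apply {x : S} {m : M} (hm : f m = x) :
    g.compInvOfRangeEq f hf hS x = g m := by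
  simp only [compInvOfRangeEq, comp_apply, LinearEquiv.coe_coe]
  congr 1
  rw [LinearEquiv.trans_apply, LinearEquiv.symm_apply_eq]
  ext
  simp [hm]

theorem injective_compInvOfRangeEq (hg : Function.Injective g) :
    Function.Injective (g.compInvOfRangeEq f hf hS) :=
  hg.comp (LinearEquiv.injective _)

theorem range_compInvOfRangeEq : range (g.compInvOfRangeEq f hf hS) = range g := by
  simp [compInvOfRangeEq, range_comp, LinearEquiv.range]

end LinearMap

section M4

variable {F A B : Type*} [Field F] [Ring A] [Algebra F A] [Ring B] [Algebra F B]

/-- `u`, `a`, `b` multiply like `e₁₁ + e₃₃`, `e₁₂`, `e₂₃` in `M₃(F)`. -/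
structure M4Relations (u a b : A) : Prop where
  u_mul_u : u * u = u
  u_mul_a : u * a = a
  a_mul_u : a * u = 0
  u_mul_b : u * b = 0
  b_mul_u : b * u = b
  a_mul_a : a * a = 0
  b_mul_b : b * b = 0
  b_mul_a : b * a = 0

/-- The structure constants of `M₄` in the basis `e₁₁ + e₃₃, e₁₂, e₂₃, e₁₃`. -/
def m4Mul (f g : Fin 4 → F) : Fin 4 → F :=
  ![f 0 * g 0, f 0 * g 1, f 2 * g 0, f 1 * g 2 + f 0 * g 3 + f 3 * g 0]

variable (F) in
noncomputable def m4Combination (u a b : A) : (Fin 4 → F) →ₗ[F] A :=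
  Fintype.linearCombination F ![u, a, b, a * b]

variable {u a b : A}

theorem m4Combination_apply (f : Fin 4 → F) :
    m4Combination F u a b f = f 0 • u + f 1 • a + f 2 • b + f 3 • (a * b) := by
  simp [m4Combination, Fintype.linearCombination_apply, Fin.sum_univ_four, add_assoc]

theorem range_m4Combination :
    LinearMap.range (m4Combination F u a b) = Submodule.span F {u, a, b, a * b} := by
  simp only [m4Combination, Fintype.range_linearCombination, Matrix.range_cons, Matrix.range_empty,
    Set.union_empty, Set.singleton_union]

theorem m4Combination_mem_span (f : Fin 4 → F) :
    m4Combination F u a b f ∈ Submodule.span F {u, a, b, a * b} := by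
  rw [← range_m4Combination]
  exact LinearMap.mem_range_self _ f

theorem exists_m4Combination_eq {x : A} (hx : x ∈ Submodule.span F {u, a, b, a * b}) :
    ∃ f : Fin 4 → F, m4Combination F u a b f = x := by
  rwa [← range_m4Combination, LinearMap.mem_range] at hx

theorem M4Relations.of_involution {s : A →ₗ[F] A} (hs_mul : ∀ x y : A, s (x * y) = s y * s x)
    (hu_idem : u * u = u) (hu_sym : s u = u) (hua : u * a = a) (hau : a * u = 0)
    (hsaa : s a * a = 0) : M4Relations u a (s a) where
  u_mul_u := hu_idem
  u_mul_a := hua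
  a_mul_u := hau
  u_mul_b := by rw [← hu_sym, ← hs_mul, hau, map_zero]
  b_mul_u := by rw [← hu_sym, ← hs_mul, hua]
  a_mul_a := by rw [← hua, mul_assoc, ← mul_assoc a, hau, zero_mul, mul_zero]
  b_mul_b := by rw [← hs_mul, ← hua, mul_assoc, ← mul_assoc a, hau, zero_mul, mul_zero, map_zero]
  b_mul_a := hsaa

namespace M4Relations

theorem m4Combination_mul (h : M4Relations u a b) (f g : Fin 4 → F) :
    m4Combination F u a b f * m4Combination F u a b g = m4Combination F u a b (m4Mul f g) := by
  have u_mul_ab : u * (a * b) = a * b := by rw [← mul_assoc, h.u_mul_a]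
  have ab_mul_u : a * b * u = a * b := by rw [mul_assoc, h.b_mul_u]
  have a_mul_ab : a * (a * b) = 0 := by rw [← mul_assoc, h.a_mul_a, zero_mul]
  have ab_mul_a : a * b * a = 0 := by rw [mul_assoc, h.b_mul_a, mul_zero]
  have b_mul_ab : b * (a * b) = 0 := by rw [← mul_assoc, h.b_mul_a, zero_mul]
  have ab_mul_b : a * b * b = 0 := by rw [mul_assoc, h.b_mul_b, mul_zero]
  have ab_mul_ab : a * b * (a * b) = 0 := by rw [mul_assoc, b_mul_ab, mul_zero]
  simp only [m4Combination_apply, m4Mul, Matrix.cons_val, mul_add, add_mul, smul_mul_smul_comm,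
    h.u_mul_u, h.u_mul_a, h.a_mul_u, h.u_mul_b, h.b_mul_u, h.a_mul_a, h.b_mul_b, h.b_mul_a,
    u_mul_ab, ab_mul_u, a_mul_ab, ab_mul_a, b_mul_ab, ab_mul_b, ab_mul_ab, smul_zero, add_zero,
    zero_add]
  module

theorem linearIndependent (h : M4Relations u a b) (hab : a * b ≠ 0) :
    LinearIndependent F ![u, a, b, a * b] := by
  have ha : a ≠ 0 := by rintro rfl; simp at hab
  rw [Fintype.linearIndependent_iff]
  intro g hg
  simp only [Fin.sum_univ_four, Matrix.cons_val] at hg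
  have h0 : g 0 • a = 0 := by
    simpa [add_mul, smul_mul_assoc, mul_assoc, h.u_mul_a, h.a_mul_a, h.b_mul_a] using
      congrArg (· * a) hg
  have h1 : g 1 • (a * b) = 0 := by
    simpa [add_mul, smul_mul_assoc, mul_assoc, h.u_mul_b, h.b_mul_b] using
      congrArg (· * b) hg
  have h2 : g 2 • (a * b) = 0 := by
    simpa [mul_add, mul_smul_comm, ← mul_assoc, h.a_mul_u, h.a_mul_a] using
      congrArg (a * ·) hg
  have hg0 : g 0 = 0 := (smul_eq_zero.mp h0).resolve_right ha
  have hg1 : g 1 = 0 := (smul_eq_zero.mp h1).resolve_right hab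
  have hg2 : g 2 = 0 := (smul_eq_zero.mp h2).resolve_right hab
  have hg3 : g 3 = 0 := by simpa [hg0, hg1, hg2, hab] using hg
  intro i
  fin_cases i <;> assumption

theorem injective_m4Combination (h : M4Relations u a b) (hab : a * b ≠ 0) :
    Function.Injective (m4Combination F u a b) :=
  linearIndependent_iff_injective_fintypeLinearCombination.mp (h.linearIndependent hab)

theorem mul_mem_span (h : M4Relations u a b) {x y : A}
    (hx : x ∈ Submodule.span F {u, a, b, a * b}) (hy : y ∈ Submodule.span F {u, a, b, a * b}) :
    x * y ∈ Submodule.span F {u, a, b, a * b} := by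
  obtain ⟨f, rfl⟩ := exists_m4Combination_eq hx
  obtain ⟨g, rfl⟩ := exists_m4Combination_eq hy
  exact h.m4Combination_mul f g ▸ m4Combination_mem_span _

variable (F) in
noncomputable def hom (h : M4Relations u a b) (hab : a * b ≠ 0) (u' a' b' : B) :
    Submodule.span F {u, a, b, a * b} →ₗ[F] B :=
  (m4Combination F u' a' b').compInvOfRangeEq _ (h.injective_m4Combination hab) range_m4Combination

variable {h : M4Relations u a b} {hab : a * b ≠ 0} {u' a' b' : B}

theorem hom_apply {f : Fin 4 → F} {x : Submodule.span F {u, a, b, a * b}}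
    (hx : m4Combination F u a b f = x) : h.hom F hab u' a' b' x = m4Combination F u' a' b' f :=
  LinearMap.compInvOfRangeEq_apply hx

theorem hom_apply_single (i : Fin 4)
    (hi : ![u, a, b, a * b] i ∈ Submodule.span F {u, a, b, a * b}) :
    h.hom F hab u' a' b' ⟨![u, a, b, a * b] i, hi⟩ = ![u', a', b', a' * b'] i :=
  (hom_apply (f := Pi.single i 1) (by simp [m4Combination])).trans (by simp [m4Combination])

theorem injective_hom (h' : M4Relations u' a' b') (hab' : a' * b' ≠ 0) :
    Function.Injective (h.hom F hab u' a' b') :=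
  LinearMap.injective_compInvOfRangeEq (h'.injective_m4Combination hab')

theorem range_hom :
    LinearMap.range (h.hom F hab u' a' b') = Submodule.span F {u', a', b', a' * b'} :=
  LinearMap.range_compInvOfRangeEq.trans range_m4Combination

theorem hom_mul (h' : M4Relations u' a' b') {x y : A}
    (hx : x ∈ Submodule.span F {u, a, b, a * b}) (hy : y ∈ Submodule.span F {u, a, b, a * b})
    (hxy : x * y ∈ Submodule.span F {u, a, b, a * b}) :
    h.hom F hab u' a' b' ⟨x * y, hxy⟩ =
      h.hom F hab u' a' b' ⟨x, hx⟩ * h.hom F hab u' a' b' ⟨y, hy⟩ := by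
  obtain ⟨f, rfl⟩ := exists_m4Combination_eq hx
  obtain ⟨g, rfl⟩ := exists_m4Combination_eq hy
  rw [hom_apply (h.m4Combination_mul f g).symm, hom_apply rfl, hom_apply rfl,
    h'.m4Combination_mul]

end M4Relations

theorem involution_m4Combination {s : A →ₗ[F] A} (hs_mul : ∀ x y : A, s (x * y) = s y * s x)
    (hs_invol : ∀ x : A, s (s x) = x) (hu_sym : s u = u) (f : Fin 4 → F) :
    s (m4Combination F u a (s a) f) = m4Combination F u a (s a) ![f 0, f 2, f 1, f 3] := by
  simp only [m4Combination_apply, map_add, map_smul, hs_mul, hs_invol, hu_sym, Matrix.cons_val]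
  module

theorem involution_mem_span {s : A →ₗ[F] A} (hs_mul : ∀ x y : A, s (x * y) = s y * s x)
    (hs_invol : ∀ x : A, s (s x) = x) (hu_sym : s u = u) {x : A}
    (hx : x ∈ Submodule.span F {u, a, s a, a * s a}) :
    s x ∈ Submodule.span F {u, a, s a, a * s a} := by
  obtain ⟨f, rfl⟩ := exists_m4Combination_eq hx
  exact involution_m4Combination hs_mul hs_invol hu_sym f ▸ m4Combination_mem_span _

theorem M4Relations.hom_involution {s : A →ₗ[F] A} {h : M4Relations u a (s a)}
    {hab : a * s a ≠ 0} {u' a' : B} (hs_mul : ∀ x y : A, s (x * y) = s y * s x)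
    (hs_invol : ∀ x : A, s (s x) = x) (hu_sym : s u = u)
    {s' : B →ₗ[F] B} (hs'_mul : ∀ x y : B, s' (x * y) = s' y * s' x)
    (hs'_invol : ∀ x : B, s' (s' x) = x) (hu'_sym : s' u' = u') {x : A}
    (hx : x ∈ Submodule.span F {u, a, s a, a * s a})
    (hsx : s x ∈ Submodule.span F {u, a, s a, a * s a}) :
    h.hom F hab u' a' (s' a') ⟨s x, hsx⟩ = s' (h.hom F hab u' a' (s' a') ⟨x, hx⟩) := by
  obtain ⟨f, rfl⟩ := exists_m4Combination_eq hx
  rw [hom_apply (involution_m4Combination hs_mul hs_invol hu_sym f).symm, hom_apply rfl,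
    involution_m4Combination hs'_mul hs'_invol hu'_sym]

end M4

section Reflection

open Matrix

variable {R : Type*}

theorem reflectionInvolution_mul [CommSemiring R] (M N : Matrix (Fin 3) (Fin 3) R) :
    reflectionInvolution (M * N) = reflectionInvolution N * reflectionInvolution M := by
  ext i j
  simp only [reflectionInvolution, mul_apply, Fin.sum_univ_three]
  fin_cases i <;> fin_cases j <;> simp <;> ring

theorem reflectionInvolution_reflectionInvolution (M : Matrix (Fin 3) (Fin 3) R) :
    reflectionInvolution (reflectionInvolution M) = M := by
  ext i j
  simp [reflectionInvolution]

theorem reflectionInvolution_single [Zero R] (i j : Fin 3) (c : R) :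
    reflectionInvolution (single i j c) = single (2 - j) (2 - i) c := by
  ext k l
  simp only [reflectionInvolution, single_apply]
  congr 1
  grind

theorem reflectionInvolution_single_zero_one [Zero R] (c : R) :
    reflectionInvolution (single 0 1 c) = single 1 2 c :=
  reflectionInvolution_single 0 1 c

variable (R) in
def reflectionInvolutionLinearMap [Semiring R] :
    Matrix (Fin 3) (Fin 3) R →ₗ[R] Matrix (Fin 3) (Fin 3) R where
  toFun := reflectionInvolution
  map_add' _ _ := rfl
  map_smul' _ _ := rfl

@[simp]
theorem reflectionInvolutionLinearMap_apply [Semiring R] (M : Matrix (Fin 3) (Fin 3) R) :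
    reflectionInvolutionLinearMap R M = reflectionInvolution M :=
  rfl

theorem reflectionInvolution_single_zero_zero_add_single_two_two [Semiring R] (c : R) :
    reflectionInvolution (single 0 0 c + single 2 2 c) = single 0 0 c + single 2 2 c := by
  rw [← reflectionInvolutionLinearMap_apply, map_add]
  simp [reflectionInvolution_single, add_comm]

theorem single_zero_one_mul_reflectionInvolution [Semiring R] :
    single 0 1 (1 : R) * reflectionInvolution (single 0 1 1) = single 0 2 1 := by
  simp [reflectionInvolution_single_zero_one]

theorem single_zero_one_mul_reflectionInvolution_ne_zero [Semiring R] [Nontrivial R] :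
    single 0 1 (1 : R) * reflectionInvolution (single 0 1 1) ≠ 0 := by
  rw [single_zero_one_mul_reflectionInvolution]
  exact fun h => one_ne_zero (α := R) (by simpa using congrFun (congrFun h 0) 2)

theorem m4Relations_matrix {F : Type*} [Field F] :
    M4Relations (single 0 0 (1 : F) + single 2 2 1) (single 0 1 1)
      (reflectionInvolutionLinearMap F (single 0 1 1)) :=
  M4Relations.of_involution reflectionInvolution_mul (by simp [add_mul, mul_add])
    (reflectionInvolution_single_zero_zero_add_single_two_two 1) (by simp [add_mul])
    (by simp [mul_add]) (by simp [reflectionInvolution_single_zero_one])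

end Reflection

/-- Let `A` be an `F`-algebra with an `F`-linear involution `s`, and let
`u, a ∈ A` satisfy `u² = u`, `s u = u`, `u·a = a`, `a·u = 0`, `s a · a = 0`
and `a · s a ≠ 0`.  Then `u, a, s a, a·s a` are linearly independent, their
span `S` is closed under multiplication and under `s`, and the linear map
`φ : S → M₃(F)` with `φ(u) = e₁₁ + e₃₃`, `φ(a) = e₁₂`, `φ(s a) = e₂₃`,
`φ(a·s a) = e₁₃` is an injective (non-unital) algebra homomorphism onto the
subalgebra `M₄ = F(e₁₁+e₃₃) + Fe₁₂ + Fe₂₃ + Fe₁₃` of upper triangular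
matrices, intertwining `s` with the reflection involution. -/
theorem stmt9 {F A : Type*} [Field F] [Ring A] [Algebra F A]
    (s : A →ₗ[F] A)
    (hs_mul : ∀ x y : A, s (x * y) = s y * s x)
    (hs_invol : ∀ x : A, s (s x) = x)
    (u a : A)
    (hu_idem : u * u = u) (hu_sym : s u = u)
    (hua : u * a = a) (hau : a * u = 0)
    (hsaa : s a * a = 0) (hasa : a * s a ≠ 0) :
    LinearIndependent F ![u, a, s a, a * s a] ∧
    (∀ x ∈ Submodule.span F ({u, a, s a, a * s a} : Set A),
      ∀ y ∈ Submodule.span F ({u, a, s a, a * s a} : Set A),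
        x * y ∈ Submodule.span F ({u, a, s a, a * s a} : Set A)) ∧
    (∀ x ∈ Submodule.span F ({u, a, s a, a * s a} : Set A),
      s x ∈ Submodule.span F ({u, a, s a, a * s a} : Set A)) ∧
    ∃ φ : (Submodule.span F ({u, a, s a, a * s a} : Set A)) →ₗ[F]
        Matrix (Fin 3) (Fin 3) F,
      Function.Injective φ ∧
      (∀ (x y : A) (hx : x ∈ Submodule.span F ({u, a, s a, a * s a} : Set A))
          (hy : y ∈ Submodule.span F ({u, a, s a, a * s a} : Set A))
          (hxy : x * y ∈ Submodule.span F ({u, a, s a, a * s a} : Set A)),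
        φ ⟨x * y, hxy⟩ = φ ⟨x, hx⟩ * φ ⟨y, hy⟩) ∧
      (∀ (x : A) (hx : x ∈ Submodule.span F ({u, a, s a, a * s a} : Set A))
          (hsx : s x ∈ Submodule.span F ({u, a, s a, a * s a} : Set A)),
        φ ⟨s x, hsx⟩ = reflectionInvolution (φ ⟨x, hx⟩)) ∧
      φ ⟨u, Submodule.subset_span (by simp)⟩
        = Matrix.single 0 0 (1 : F) + Matrix.single 2 2 1 ∧
      φ ⟨a, Submodule.subset_span (by simp)⟩ = Matrix.single 0 1 1 ∧
      φ ⟨s a, Submodule.subset_span (by simp)⟩ = Matrix.single 1 2 1 ∧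
      φ ⟨a * s a, Submodule.subset_span (by simp)⟩
        = Matrix.single 0 2 1 ∧
      LinearMap.range φ = Submodule.span F
        ({Matrix.single 0 0 (1 : F) + Matrix.single 2 2 1,
          Matrix.single 0 1 1, Matrix.single 1 2 1,
          Matrix.single 0 2 1} : Set (Matrix (Fin 3) (Fin 3) F)) := by
  have hA := M4Relations.of_involution hs_mul hu_idem hu_sym hua hau hsaa
  have hM := m4Relations_matrix (F := F)
  refine ⟨hA.linearIndependent hasa, fun x hx y hy => hA.mul_mem_span hx hy,
    fun x hx => involution_mem_span hs_mul hs_invol hu_sym hx,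
    hA.hom F hasa (Matrix.single 0 0 1 + Matrix.single 2 2 1) (Matrix.single 0 1 1)
      (reflectionInvolutionLinearMap F (Matrix.single 0 1 1)),
    M4Relations.injective_hom hM single_zero_one_mul_reflectionInvolution_ne_zero,
    fun x y hx hy hxy => M4Relations.hom_mul hM hx hy hxy,
    fun x hx hsx => M4Relations.hom_involution hs_mul hs_invol hu_sym reflectionInvolution_mul
      reflectionInvolution_reflectionInvolution
      (reflectionInvolution_single_zero_zero_add_single_two_two 1) hx hsx,
    M4Relations.hom_apply_single 0 _, M4Relations.hom_apply_single 1 _,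
    (M4Relations.hom_apply_single 2 _).trans (reflectionInvolution_single_zero_one 1),
    (M4Relations.hom_apply_single 3 _).trans single_zero_one_mul_reflectionInvolution, ?_⟩
  rw [M4Relations.range_hom, reflectionInvolutionLinearMap_apply,
    single_zero_one_mul_reflectionInvolution, reflectionInvolution_single_zero_one]
end
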